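/- arXiv:1106.0648 — 7 statements merged into one kernel-verified Lean document; each statement's English description precedes it below -/
import Mathlib

section
/- Let β > 0 and 0 < c < 2/(9β). Then the Gardner soliton profile satisfies the first-integral identity (Q_{c,β}')² = c·Q_{c,β}² − (2/3)·Q_{c,β}³ + (β/2)·Q_{c,β}⁴ at every point of ℝ. -/
/-!
Writing `D = 1 + ρ cosh(√c s)`, one has `Q = 3c/D` and `Q' = -3c ρ √c sinh(√c s)/D²`, so
`(Q')² D⁴ = 9c³ ρ² (cosh² - 1)`. Since `ρ cosh(√c s) = D - 1` and `ρ² = 1 - 9βc/2`, this equals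
`9c³ (D² - 2D + 9βc/2)`, which is `D⁴ (c Q² - (2/3) Q³ + (β/2) Q⁴)`.
-/

/-- The Gardner soliton profile `Q_{c,β}(s) = 3c / (1 + ρ·cosh(√c·s))`,
with `ρ = (1 - 9βc/2)^{1/2}`. -/
noncomputable def gardnerQ (c β : ℝ) (s : ℝ) : ℝ :=
  3 * c / (1 + Real.sqrt (1 - 9 * β * c / 2) * Real.cosh (Real.sqrt c * s))

open Real

lemma hasDerivAt_div_one_add_mul_cosh {a ρ k s : ℝ} (hD : 1 + ρ * cosh (k * s) ≠ 0) :
    HasDerivAt (fun x => a / (1 + ρ * cosh (k * x)))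
      (-(a * (ρ * (sinh (k * s) * k))) / (1 + ρ * cosh (k * s)) ^ 2) s := by
  have hcosh : HasDerivAt (fun x => cosh (k * x)) (sinh (k * s) * k) s := by
    simpa using ((hasDerivAt_id' s).const_mul k).cosh
  simpa using (hasDerivAt_const s a).fun_div ((hcosh.const_mul ρ).const_add 1) hD

lemma gardner_first_integral_algebraic {β c k ρ K S : ℝ} (hk : k ^ 2 = c)
    (hρ : ρ ^ 2 = 1 - 9 * β * c / 2) (hKS : K ^ 2 - S ^ 2 = 1) (hD : 1 + ρ * K ≠ 0) :
    (-(3 * c * (ρ * (S * k))) / (1 + ρ * K) ^ 2) ^ 2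
      = c * (3 * c / (1 + ρ * K)) ^ 2 - (2 / 3) * (3 * c / (1 + ρ * K)) ^ 3
        + (β / 2) * (3 * c / (1 + ρ * K)) ^ 4 := by
  field_simp
  linear_combination 2 * c ^ 2 * ρ ^ 2 * S ^ 2 * hk - 2 * c ^ 3 * ρ ^ 2 * hKS - 2 * c ^ 3 * hρ

lemma one_sub_nine_mul_div_two_nonneg {β c : ℝ} (hc : 0 < c) (hc2 : c < 2 / (9 * β)) :
    0 ≤ 1 - 9 * β * c / 2 := by
  have hβ : 0 < β := by
    by_contra! hβ
    have : 2 / (9 * β) ≤ 0 := div_nonpos_of_nonneg_of_nonpos (by norm_num) (by linarith)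
    linarith
  have := (lt_div_iff₀ (by positivity : (0 : ℝ) < 9 * β)).mp hc2
  linarith

theorem stmt2_general (β c : ℝ) (hc : 0 < c) (hc2 : c < 2 / (9 * β)) :
    ∀ s : ℝ, (deriv (gardnerQ c β) s) ^ 2
      = c * (gardnerQ c β s) ^ 2 - (2 / 3) * (gardnerQ c β s) ^ 3
        + (β / 2) * (gardnerQ c β s) ^ 4 := by
  intro s
  have hD : 1 + √(1 - 9 * β * c / 2) * cosh (√c * s) ≠ 0 := by positivity
  unfold gardnerQ
  rw [(hasDerivAt_div_one_add_mul_cosh (a := 3 * c) hD).deriv]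
  exact gardner_first_integral_algebraic (sq_sqrt hc.le)
    (sq_sqrt (one_sub_nine_mul_div_two_nonneg hc hc2)) (cosh_sq_sub_sinh_sq _) hD

theorem stmt2 (β c : ℝ) (hβ : 0 < β) (hc : 0 < c) (hc2 : c < 2 / (9 * β)) :
    ∀ s : ℝ, (deriv (gardnerQ c β) s) ^ 2
      = c * (gardnerQ c β s) ^ 2 - (2 / 3) * (gardnerQ c β s) ^ 3
        + (β / 2) * (gardnerQ c β s) ^ 4 :=
  stmt2_general β c hc hc2
end

section
/- Let β > 0 and 0 < c < 2/(9β). Then the Gardner soliton profile Q_{c,β} is integrable on ℝ together with all its powers, and one has the integral identities β·∫_ℝ Q_{c,β}³ = −c·∫_ℝ Q_{c,β} + ∫_ℝ Q_{c,β}² and β·∫_ℝ Q_{c,β}⁴ = −(4c/3)·∫_ℝ Q_{c,β}² + (10/9)·∫_ℝ Q_{c,β}³. -/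
open MeasureTheory Real

section ProfileEquation

variable {Q Q' : ℝ → ℝ} {c β : ℝ}

theorem integral_cube_eq_of_hasDerivAt
    (hQ' : ∀ s, HasDerivAt Q' (c * Q s - Q s ^ 2 + β * Q s ^ 3) s) (hQ'_int : Integrable Q')
    (h1 : Integrable Q) (h2 : Integrable fun s => Q s ^ 2) (h3 : Integrable fun s => Q s ^ 3) :
    β * (∫ s, Q s ^ 3) = -c * (∫ s, Q s) + ∫ s, Q s ^ 2 := by
  have hA : Integrable fun s => c * Q s - Q s ^ 2 := (h1.const_mul c).sub h2
  have h := integral_eq_zero_of_hasDerivAt_of_integrable hQ' (hA.add (h3.const_mul β)) hQ'_int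
  rw [integral_add hA (h3.const_mul β), integral_sub (h1.const_mul c) h2,
    integral_const_mul, integral_const_mul] at h
  linear_combination h

theorem integral_pow_four_eq_of_hasDerivAt (hQ : ∀ s, HasDerivAt Q (Q' s) s)
    (hQ' : ∀ s, HasDerivAt Q' (c * Q s - Q s ^ 2 + β * Q s ^ 3) s)
    (henergy : ∀ s, Q' s ^ 2 = c * Q s ^ 2 - 2 / 3 * Q s ^ 3 + β / 2 * Q s ^ 4)
    (hQQ'_int : Integrable fun s => Q s * Q' s) (h2 : Integrable fun s => Q s ^ 2)
    (h3 : Integrable fun s => Q s ^ 3) (h4 : Integrable fun s => Q s ^ 4) :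
    β * (∫ s, Q s ^ 4) = -(4 * c / 3) * (∫ s, Q s ^ 2) + 10 / 9 * ∫ s, Q s ^ 3 := by
  have hderiv : ∀ s, HasDerivAt (fun s => Q s * Q' s)
      (2 * c * Q s ^ 2 - 5 / 3 * Q s ^ 3 + 3 / 2 * β * Q s ^ 4) s := fun s =>
    ((hQ s).mul (hQ' s)).congr_deriv (by linear_combination henergy s)
  have hA : Integrable fun s => 2 * c * Q s ^ 2 - 5 / 3 * Q s ^ 3 :=
    (h2.const_mul _).sub (h3.const_mul _)
  have h := integral_eq_zero_of_hasDerivAt_of_integrable hderiv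
    (hA.add (h4.const_mul (3 / 2 * β))) hQQ'_int
  rw [integral_add hA (h4.const_mul _), integral_sub (h2.const_mul _) (h3.const_mul _),
    integral_const_mul, integral_const_mul, integral_const_mul] at h
  linear_combination 2 / 3 * h

end ProfileEquation

theorem integrable_inv_cosh : Integrable fun x : ℝ => (cosh x)⁻¹ := by
  refine (integrable_inv_one_add_sq.const_mul 4).mono'
    (continuous_cosh.inv₀ fun x => (cosh_pos x).ne').aestronglyMeasurable
    (Filter.Eventually.of_forall fun x => ?_)
  have hexp : exp |x| ≤ 2 * cosh x := by
    rw [← cosh_abs, cosh_eq]; linarith [exp_pos (-|x|)]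
  have hquad := quadratic_le_exp_of_nonneg (abs_nonneg x)
  have hcosh : 1 + x ^ 2 ≤ 4 * cosh x := by nlinarith [sq_abs x, abs_nonneg x]
  calc ‖(cosh x)⁻¹‖ = 4 * (4 * cosh x)⁻¹ := by
        rw [norm_inv, norm_of_nonneg (cosh_pos x).le]; field_simp
    _ ≤ 4 * (1 + x ^ 2)⁻¹ := by gcongr

noncomputable def gardnerRho (c β : ℝ) : ℝ := √(1 - 9 * β * c / 2)

noncomputable def gardnerDenom (c β s : ℝ) : ℝ := 1 + gardnerRho c β * cosh (√c * s)

noncomputable def gardnerQDeriv (c β s : ℝ) : ℝ :=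
  -(3 * c * gardnerRho c β * √c) * sinh (√c * s) / gardnerDenom c β s ^ 2

section GardnerProfile

variable {c β : ℝ}

theorem gardnerQ_eq_div (s : ℝ) : gardnerQ c β s = 3 * c / gardnerDenom c β s := rfl

theorem gardnerRho_mul_cosh_le (s : ℝ) :
    gardnerRho c β * cosh (√c * s) ≤ gardnerDenom c β s := by
  rw [gardnerDenom]; linarith

theorem one_le_gardnerDenom (s : ℝ) : 1 ≤ gardnerDenom c β s := by
  have : 0 ≤ gardnerRho c β * cosh (√c * s) := mul_nonneg (sqrt_nonneg _) (cosh_pos _).le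
  rw [gardnerDenom]; linarith

theorem gardnerDenom_pos (s : ℝ) : 0 < gardnerDenom c β s :=
  one_pos.trans_le (one_le_gardnerDenom s)

theorem gardnerRho_mul_sinh_sq (hβc : 9 * β * c ≤ 2) (s : ℝ) :
    (gardnerRho c β * sinh (√c * s)) ^ 2
      = gardnerDenom c β s ^ 2 - 2 * gardnerDenom c β s + 9 * β * c / 2 := by
  have hρ : gardnerRho c β ^ 2 = 1 - 9 * β * c / 2 := sq_sqrt (by linarith)
  rw [gardnerDenom]
  linear_combination gardnerRho c β ^ 2 * sinh_sq (√c * s) - hρ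

theorem hasDerivAt_gardnerDenom (s : ℝ) :
    HasDerivAt (gardnerDenom c β) (gardnerRho c β * √c * sinh (√c * s)) s := by
  have h := (((hasDerivAt_id' s).const_mul √c).cosh.const_mul (gardnerRho c β)).const_add 1
  exact h.congr_deriv (by ring)

theorem hasDerivAt_gardnerQ (s : ℝ) : HasDerivAt (gardnerQ c β) (gardnerQDeriv c β s) s := by
  have h := (hasDerivAt_const s (3 * c)).div (hasDerivAt_gardnerDenom (c := c) (β := β) s)
    (gardnerDenom_pos s).ne'
  exact h.congr_deriv (by rw [gardnerQDeriv]; ring)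

theorem continuous_gardnerQ : Continuous (gardnerQ c β) :=
  continuous_iff_continuousAt.2 fun s => (hasDerivAt_gardnerQ s).continuousAt

theorem gardnerQDeriv_sq (hc : 0 ≤ c) (hβc : 9 * β * c ≤ 2) (s : ℝ) :
    gardnerQDeriv c β s ^ 2
      = c * gardnerQ c β s ^ 2 - 2 / 3 * gardnerQ c β s ^ 3 + β / 2 * gardnerQ c β s ^ 4 := by
  have hD := (gardnerDenom_pos (c := c) (β := β) s).ne'
  calc gardnerQDeriv c β s ^ 2
      = 9 * c ^ 2 * √c ^ 2 * (gardnerRho c β * sinh (√c * s)) ^ 2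
          / gardnerDenom c β s ^ 4 := by
        rw [gardnerQDeriv]; ring
    _ = _ := by
        rw [gardnerRho_mul_sinh_sq hβc, sq_sqrt hc, gardnerQ_eq_div]
        field_simp
        ring

theorem hasDerivAt_gardnerQDeriv (hc : 0 ≤ c) (hβc : 9 * β * c ≤ 2) (s : ℝ) :
    HasDerivAt (gardnerQDeriv c β)
      (c * gardnerQ c β s - gardnerQ c β s ^ 2 + β * gardnerQ c β s ^ 3) s := by
  have hD := (gardnerDenom_pos (c := c) (β := β) s).ne'
  have hN : HasDerivAt (fun x => -(3 * c * gardnerRho c β * √c) * sinh (√c * x))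
      (-3 * c ^ 2 * (gardnerDenom c β s - 1)) s := by
    refine (((hasDerivAt_id' s).const_mul √c).sinh.const_mul _).congr_deriv ?_
    rw [gardnerDenom]
    linear_combination (-3 * c * gardnerRho c β * cosh (√c * s)) * sq_sqrt hc
  refine (hN.div ((hasDerivAt_gardnerDenom s).pow 2) (pow_ne_zero 2 hD)).congr_deriv ?_
  rw [Pi.pow_apply, gardnerQ_eq_div]
  field_simp
  linear_combination (2 * c * gardnerDenom c β s * gardnerRho c β ^ 2 * sinh (√c * s) ^ 2)
    * sq_sqrt hc + 2 * c ^ 2 * gardnerDenom c β s * gardnerRho_mul_sinh_sq hβc s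

theorem norm_gardnerQ_le (hc : 0 ≤ c) (s : ℝ) : ‖gardnerQ c β s‖ ≤ 3 * c := by
  rw [gardnerQ_eq_div, norm_of_nonneg (div_nonneg (by positivity) (gardnerDenom_pos s).le)]
  exact div_le_self (by positivity) (one_le_gardnerDenom s)

theorem abs_gardnerQDeriv_le (hc : 0 ≤ c) (s : ℝ) :
    |gardnerQDeriv c β s| ≤ √c * gardnerQ c β s := by
  have hD := gardnerDenom_pos (c := c) (β := β) s
  have hsinh : |sinh (√c * s)| ≤ cosh (√c * s) := by
    rw [abs_sinh, ← cosh_abs (√c * s)]; exact (sinh_lt_cosh _).le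
  have hρsinh : gardnerRho c β * |sinh (√c * s)| ≤ gardnerDenom c β s :=
    (mul_le_mul_of_nonneg_left hsinh (sqrt_nonneg _)).trans (gardnerRho_mul_cosh_le s)
  rw [gardnerQDeriv, gardnerQ_eq_div, abs_div, abs_mul, abs_neg,
    abs_of_nonneg (by unfold gardnerRho; positivity : 0 ≤ 3 * c * gardnerRho c β * √c),
    abs_of_pos (pow_pos hD 2), div_le_iff₀ (pow_pos hD 2)]
  calc 3 * c * gardnerRho c β * √c * |sinh (√c * s)|
      = 3 * c * √c * (gardnerRho c β * |sinh (√c * s)|) := by ring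
    _ ≤ 3 * c * √c * gardnerDenom c β s := by gcongr
    _ = √c * (3 * c / gardnerDenom c β s) * gardnerDenom c β s ^ 2 := by field_simp

theorem integrable_gardnerQ (hc : 0 < c) (hβc : 9 * β * c < 2) : Integrable (gardnerQ c β) := by
  have hρ : 0 < gardnerRho c β := sqrt_pos.2 (by linarith)
  refine ((integrable_inv_cosh.comp_mul_left' (sqrt_pos.2 hc).ne').const_mul
    (3 * c / gardnerRho c β)).mono' continuous_gardnerQ.aestronglyMeasurable
    (Filter.Eventually.of_forall fun s => ?_)
  have hcosh := cosh_pos (√c * s)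
  calc ‖gardnerQ c β s‖ ≤ 3 * c / (gardnerRho c β * cosh (√c * s)) := by
        rw [gardnerQ_eq_div, norm_of_nonneg (div_nonneg (by positivity) (gardnerDenom_pos s).le)]
        gcongr
        exact gardnerRho_mul_cosh_le s
    _ = 3 * c / gardnerRho c β * (cosh (√c * s))⁻¹ := by field_simp

theorem integrable_gardnerQ_pow (hc : 0 < c) (hβc : 9 * β * c < 2) {n : ℕ} (hn : 1 ≤ n) :
    Integrable fun s => gardnerQ c β s ^ n := by
  obtain ⟨m, rfl⟩ := Nat.exists_eq_add_of_le' hn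
  simp_rw [pow_succ]
  refine (integrable_gardnerQ hc hβc).bdd_mul (c := (3 * c) ^ m)
    (continuous_gardnerQ.pow m).aestronglyMeasurable (Filter.Eventually.of_forall fun s => ?_)
  rw [norm_pow]
  exact pow_le_pow_left₀ (norm_nonneg _) (norm_gardnerQ_le hc.le s) m

theorem integrable_gardnerQDeriv (hc : 0 < c) (hβc : 9 * β * c < 2) :
    Integrable (gardnerQDeriv c β) :=
  ((integrable_gardnerQ hc hβc).const_mul √c).mono'
    (continuous_iff_continuousAt.2 fun s =>
      (hasDerivAt_gardnerQDeriv hc.le hβc.le s).continuousAt).aestronglyMeasurable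
    (Filter.Eventually.of_forall fun s => (norm_eq_abs _).trans_le (abs_gardnerQDeriv_le hc.le s))

theorem integrable_gardnerQ_mul_gardnerQDeriv (hc : 0 < c) (hβc : 9 * β * c < 2) :
    Integrable fun s => gardnerQ c β s * gardnerQDeriv c β s :=
  (integrable_gardnerQDeriv hc hβc).bdd_mul continuous_gardnerQ.aestronglyMeasurable
    (Filter.Eventually.of_forall (norm_gardnerQ_le hc.le))

end GardnerProfile

theorem stmt3 (β c : ℝ) (hβ : 0 < β) (hc : 0 < c) (hc2 : c < 2 / (9 * β)) :
    (∀ n : ℕ, 1 ≤ n → MeasureTheory.Integrable (fun s => (gardnerQ c β s) ^ n)) ∧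
    (β * (∫ s : ℝ, (gardnerQ c β s) ^ 3)
      = -c * (∫ s : ℝ, gardnerQ c β s) + ∫ s : ℝ, (gardnerQ c β s) ^ 2) ∧
    (β * (∫ s : ℝ, (gardnerQ c β s) ^ 4)
      = -(4 * c / 3) * (∫ s : ℝ, (gardnerQ c β s) ^ 2)
        + (10 / 9) * ∫ s : ℝ, (gardnerQ c β s) ^ 3) := by
  have hβc : 9 * β * c < 2 := by
    rw [lt_div_iff₀ (by positivity)] at hc2; linarith
  have hpow : ∀ n : ℕ, 1 ≤ n → Integrable fun s => gardnerQ c β s ^ n :=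
    fun n hn => integrable_gardnerQ_pow hc hβc hn
  have hQ'' := hasDerivAt_gardnerQDeriv hc.le hβc.le
  refine ⟨hpow, ?_, ?_⟩
  · exact integral_cube_eq_of_hasDerivAt hQ'' (integrable_gardnerQDeriv hc hβc)
      (integrable_gardnerQ hc hβc) (hpow 2 (by norm_num)) (hpow 3 (by norm_num))
  · exact integral_pow_four_eq_of_hasDerivAt hasDerivAt_gardnerQ hQ''
      (gardnerQDeriv_sq hc.le hβc.le) (integrable_gardnerQ_mul_gardnerQDeriv hc hβc)
      (hpow 2 (by norm_num)) (hpow 3 (by norm_num)) (hpow 4 (by norm_num))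
end

section
/- Let β > 0 and 0 < c < 2/(9β). Then the Gardner soliton profile satisfies ∫_ℝ Q_{c,β} = (3β/2)·∫_ℝ Q_{c,β}² + 6√c. -/
open Real MeasureTheory Filter Topology

namespace Real

lemma one_add_sq_div_two_le_cosh (x : ℝ) : 1 + x ^ 2 / 2 ≤ cosh x := by
  have h := sum_le_hasSum (Finset.range 2) (fun n _ => by rw [pow_mul]; positivity) (hasSum_cosh x)
  simpa [Finset.sum_range_succ] using h

lemma tendsto_cosh_atTop : Tendsto cosh atTop atTop :=
  tendsto_atTop_mono
    (fun u => show u ≤ cosh u by nlinarith [one_add_sq_div_two_le_cosh u, sq_nonneg (u - 1)])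
    tendsto_id

end Real

section OneAddMulCosh

variable {ρ : ℝ}

lemma one_le_one_add_mul_cosh (hρ : 0 ≤ ρ) (u : ℝ) : 1 ≤ 1 + ρ * cosh u := by
  have := mul_nonneg hρ (zero_le_one.trans (one_le_cosh u))
  linarith

lemma one_add_mul_cosh_pos (hρ : 0 ≤ ρ) (u : ℝ) : 0 < 1 + ρ * cosh u :=
  zero_lt_one.trans_le (one_le_one_add_mul_cosh hρ u)

lemma inv_one_add_mul_cosh_le (hρ : 0 < ρ) (u : ℝ) :
    (1 + ρ * cosh u)⁻¹ ≤ 2 / ρ * (1 + u ^ 2)⁻¹ := by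
  calc (1 + ρ * cosh u)⁻¹ ≤ (ρ / 2 * (1 + u ^ 2))⁻¹ := by
        refine inv_anti₀ (by positivity) ?_
        nlinarith [mul_le_mul_of_nonneg_left (one_add_sq_div_two_le_cosh u) hρ.le]
    _ = 2 / ρ * (1 + u ^ 2)⁻¹ := by rw [mul_inv, inv_div]

lemma integrable_inv_one_add_mul_cosh (hρ : 0 < ρ) :
    Integrable fun u => (1 + ρ * cosh u)⁻¹ := by
  refine (integrable_inv_one_add_sq.const_mul (2 / ρ)).mono' (by fun_prop) ?_
  refine ae_of_all _ fun u => ?_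
  rw [norm_inv, Real.norm_of_nonneg (one_add_mul_cosh_pos hρ.le u).le]
  exact inv_one_add_mul_cosh_le hρ u

lemma integrable_inv_one_add_mul_cosh_sq (hρ : 0 < ρ) :
    Integrable fun u => (1 + ρ * cosh u)⁻¹ ^ 2 := by
  refine (integrable_inv_one_add_mul_cosh hρ).mono' (by fun_prop) (ae_of_all _ fun u => ?_)
  have h1 := one_le_one_add_mul_cosh hρ.le u
  rw [norm_pow, norm_inv, Real.norm_of_nonneg (by linarith)]
  exact pow_le_of_le_one (by positivity) (inv_le_one_of_one_le₀ h1) two_ne_zero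

lemma hasDerivAt_mul_sinh_div_one_add_mul_cosh (hρ : 0 ≤ ρ) (u : ℝ) :
    HasDerivAt (fun u => ρ * sinh u / (1 + ρ * cosh u))
      ((1 + ρ * cosh u)⁻¹ - (1 - ρ ^ 2) * (1 + ρ * cosh u)⁻¹ ^ 2) u := by
  have hD := (one_add_mul_cosh_pos hρ u).ne'
  refine (((hasDerivAt_sinh u).const_mul ρ).div
    (((hasDerivAt_cosh u).const_mul ρ).const_add 1) hD).congr_deriv ?_
  field_simp
  linear_combination ρ ^ 2 * cosh_sq u

lemma tendsto_mul_sinh_div_one_add_mul_cosh_atTop (hρ : 0 < ρ) :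
    Tendsto (fun u => ρ * sinh u / (1 + ρ * cosh u)) atTop (𝓝 1) := by
  have hgap : ∀ u,
      ρ * sinh u / (1 + ρ * cosh u) = 1 - (1 + ρ * exp (-u)) / (1 + ρ * cosh u) := by
    intro u
    have hD := (one_add_mul_cosh_pos hρ.le u).ne'
    rw [← cosh_sub_sinh]
    field_simp
    ring
  have hnum : Tendsto (fun u => 1 + ρ * exp (-u)) atTop (𝓝 1) := by
    simpa using (tendsto_exp_neg_atTop_nhds_zero.const_mul ρ).const_add 1
  have hden : Tendsto (fun u => 1 + ρ * cosh u) atTop atTop :=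
    tendsto_atTop_add_const_left _ 1 (tendsto_cosh_atTop.const_mul_atTop hρ)
  simpa [hgap] using (hnum.div_atTop hden).const_sub 1

lemma tendsto_mul_sinh_div_one_add_mul_cosh_atBot (hρ : 0 < ρ) :
    Tendsto (fun u => ρ * sinh u / (1 + ρ * cosh u)) atBot (𝓝 (-1)) := by
  have h := ((tendsto_mul_sinh_div_one_add_mul_cosh_atTop hρ).comp tendsto_neg_atBot_atTop).neg
  refine h.congr fun u => ?_
  simp [neg_div]

lemma integral_inv_one_add_mul_cosh_sub (hρ : 0 < ρ) :
    ∫ u, ((1 + ρ * cosh u)⁻¹ - (1 - ρ ^ 2) * (1 + ρ * cosh u)⁻¹ ^ 2) = 2 := by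
  rw [integral_of_hasDerivAt_of_tendsto (hasDerivAt_mul_sinh_div_one_add_mul_cosh hρ.le)
    ((integrable_inv_one_add_mul_cosh hρ).sub
      ((integrable_inv_one_add_mul_cosh_sq hρ).const_mul _))
    (tendsto_mul_sinh_div_one_add_mul_cosh_atBot hρ)
    (tendsto_mul_sinh_div_one_add_mul_cosh_atTop hρ)]
  norm_num

end OneAddMulCosh

theorem stmt4 (β c : ℝ) (hβ : 0 < β) (hc : 0 < c) (hc2 : c < 2 / (9 * β)) :
    (∫ s : ℝ, gardnerQ c β s)
      = (3 * β / 2) * (∫ s : ℝ, (gardnerQ c β s) ^ 2) + 6 * Real.sqrt c := by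
  set ρ := √(1 - 9 * β * c / 2)
  have hρsq_pos : 0 < 1 - 9 * β * c / 2 := by
    rw [lt_div_iff₀ (by positivity)] at hc2
    linarith
  have hρ : 0 < ρ := sqrt_pos.2 hρsq_pos
  have hρsq : 1 - ρ ^ 2 = 9 * β * c / 2 := by rw [sq_sqrt hρsq_pos.le]; ring
  have hsc : √c ≠ 0 := (sqrt_pos.2 hc).ne'
  have hQ : gardnerQ c β = fun s => 3 * c * (1 + ρ * cosh (√c * s))⁻¹ :=
    funext fun s => div_eq_mul_inv _ _
  have hQint : Integrable (gardnerQ c β) :=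
    hQ ▸ ((integrable_inv_one_add_mul_cosh hρ).comp_mul_left' hsc).const_mul _
  have hQ2int : Integrable fun s => gardnerQ c β s ^ 2 := by
    simp only [hQ, mul_pow]
    exact ((integrable_inv_one_add_mul_cosh_sq hρ).comp_mul_left' hsc).const_mul _
  have hcombine : ∀ s, gardnerQ c β s - 3 * β / 2 * gardnerQ c β s ^ 2 = 3 * c *
      ((1 + ρ * cosh (√c * s))⁻¹ - (1 - ρ ^ 2) * (1 + ρ * cosh (√c * s))⁻¹ ^ 2) := by
    intro s
    rw [hQ, hρsq]
    ring
  have hdiff : ∫ s, (gardnerQ c β s - 3 * β / 2 * gardnerQ c β s ^ 2) = 6 * √c := by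
    simp_rw [hcombine]
    rw [integral_const_mul, Measure.integral_comp_mul_left
      (fun u => (1 + ρ * cosh u)⁻¹ - (1 - ρ ^ 2) * (1 + ρ * cosh u)⁻¹ ^ 2),
      integral_inv_one_add_mul_cosh_sub hρ, smul_eq_mul, abs_inv, abs_of_pos (sqrt_pos.2 hc)]
    nth_rw 1 [← sq_sqrt hc.le]
    field_simp
    ring
  rw [integral_sub hQint (hQ2int.const_mul _), integral_const_mul] at hdiff
  linarith
end

section
/- Let β > 0 and 0 < c < 2/(9β). Define the Gardner energy E_β[Q_{c,β}] := (1/2)·∫_ℝ (Q_{c,β}')² − (1/3)·∫_ℝ Q_{c,β}³ + (β/4)·∫_ℝ Q_{c,β}⁴. Then E_β[Q_{c,β}] = (2/(3β))·c^{3/2} − (1/(9β))·∫_ℝ Q_{c,β}². -/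
/-- The Gardner energy `E_β[w] = (1/2)∫ (w')² − (1/3)∫ w³ + (β/4)∫ w⁴`. -/
noncomputable def gardnerEnergy (β : ℝ) (w : ℝ → ℝ) : ℝ :=
  (1 / 2) * (∫ s : ℝ, (deriv w s) ^ 2) - (1 / 3) * (∫ s : ℝ, (w s) ^ 3)
    + (β / 4) * ∫ s : ℝ, (w s) ^ 4

/-!
Write `L = Q'/Q`. The profile satisfies `L' = -Q/3 + (β/2)Q²` and the first integral
`L² = c - (2/3)Q + (β/2)Q²`, so `(Q')² = cQ² - (2/3)Q³ + (β/2)Q⁴` and the energy equals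
`(c/2)∫Q² - (2/3)∫Q³ + (β/2)∫Q⁴`. It remains to integrate
`(c/2 + 1/(9β))Q² - (2/3)Q³ + (β/2)Q⁴`: it is the derivative of
`L·(Q²/3 - Q/(9β) - c/(3β))`, which tends to `±c^{3/2}/(3β)` at `±∞` since `Q → 0` and,
by the first integral and the sign of `L`, `L → ∓√c`.
-/

open Real MeasureTheory Filter Topology

namespace Gardner

lemma integral_const_mul_add_const_mul_add_const_mul {α : Type*} [MeasurableSpace α]
    {μ : Measure α} {f g h : α → ℝ} (hf : Integrable f μ) (hg : Integrable g μ)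
    (hh : Integrable h μ) (a b d : ℝ) :
    ∫ x, (a * f x + b * g x + d * h x) ∂μ
      = a * ∫ x, f x ∂μ + b * ∫ x, g x ∂μ + d * ∫ x, h x ∂μ := by
  rw [integral_add (f := fun x => a * f x + b * g x) ((hf.const_mul a).add (hg.const_mul b))
      (hh.const_mul d), integral_add (hf.const_mul a) (hg.const_mul b), integral_const_mul,
    integral_const_mul, integral_const_mul]

lemma tendsto_neg_sqrt_of_tendsto_sq {α : Type*} {l : Filter α} {f : α → ℝ} {a : ℝ}
    (h : Tendsto (fun x => f x ^ 2) l (𝓝 a)) (hf : ∀ᶠ x in l, f x ≤ 0) :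
    Tendsto f l (𝓝 (-√a)) :=
  h.sqrt.neg.congr' <| hf.mono fun x hx => by rw [sqrt_sq_eq_abs, abs_of_nonpos hx, neg_neg]

lemma tendsto_sqrt_of_tendsto_sq {α : Type*} {l : Filter α} {f : α → ℝ} {a : ℝ}
    (h : Tendsto (fun x => f x ^ 2) l (𝓝 a)) (hf : ∀ᶠ x in l, 0 ≤ f x) :
    Tendsto f l (𝓝 √a) :=
  h.sqrt.congr' <| hf.mono fun x hx => by rw [sqrt_sq hx]

lemma one_add_sq_le_cosh_sq (x : ℝ) : 1 + x ^ 2 ≤ cosh x ^ 2 := by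
  have h : |x| ≤ |sinh x| := by rw [abs_sinh]; exact self_le_sinh_iff.mpr (abs_nonneg x)
  rw [cosh_sq']
  gcongr 1 + ?_
  exact sq_le_sq.mpr h

lemma tendsto_one_add_mul_sq_cocompact {k : ℝ} (hk : 0 < k) :
    Tendsto (fun s : ℝ => 1 + (k * s) ^ 2) (cocompact ℝ) atTop := by
  refine tendsto_atTop_add_const_left _ 1 <|
    ((tendsto_pow_atTop two_ne_zero).comp (tendsto_norm_cocompact_atTop.const_mul_atTop hk)).congr
      fun s => ?_
  simp only [Function.comp_apply, norm_eq_abs, mul_pow, sq_abs]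

section LogDerivative

variable {β c : ℝ} {Q L : ℝ → ℝ}

lemma hasDerivAt_primitive (hβ : β ≠ 0) {s : ℝ}
    (hQ : HasDerivAt Q (Q s * L s) s) (hL : HasDerivAt L (-(Q s) / 3 + β / 2 * Q s ^ 2) s)
    (hL_sq : L s ^ 2 = c - 2 / 3 * Q s + β / 2 * Q s ^ 2) :
    HasDerivAt (fun t => L t * (Q t ^ 2 / 3 - Q t / (9 * β) - c / (3 * β)))
      ((c / 2 + 1 / (9 * β)) * Q s ^ 2 + (-2 / 3) * Q s ^ 3 + β / 2 * Q s ^ 4) s := by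
  refine (hL.mul ((((hQ.pow 2).div_const 3).sub (hQ.div_const (9 * β))).sub_const
    (c / (3 * β)))).congr_deriv ?_
  simp only [Pi.sub_apply, Pi.pow_apply, Nat.cast_ofNat]
  field_simp
  linear_combination 6 * Q s * (18 * β * Q s - 3) * hL_sq

theorem gardnerEnergy_eq_of_hasDerivAt (hβ : β ≠ 0) (hc : 0 ≤ c)
    (hQ : ∀ s, HasDerivAt Q (Q s * L s) s)
    (hL : ∀ s, HasDerivAt L (-(Q s) / 3 + β / 2 * Q s ^ 2) s)
    (hL_sq : ∀ s, L s ^ 2 = c - 2 / 3 * Q s + β / 2 * Q s ^ 2)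
    (hQ_lim : Tendsto Q (cocompact ℝ) (𝓝 0))
    (hL_top : Tendsto L atTop (𝓝 (-√c))) (hL_bot : Tendsto L atBot (𝓝 √c))
    (h2 : Integrable fun s => Q s ^ 2) (h3 : Integrable fun s => Q s ^ 3)
    (h4 : Integrable fun s => Q s ^ 4) :
    gardnerEnergy β Q = 2 / (3 * β) * c ^ ((3 : ℝ) / 2) - 1 / (9 * β) * ∫ s, Q s ^ 2 := by
  have h_deriv_sq (s : ℝ) :
      deriv Q s ^ 2 = c * Q s ^ 2 + (-2 / 3) * Q s ^ 3 + β / 2 * Q s ^ 4 := by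
    rw [(hQ s).deriv]
    linear_combination Q s ^ 2 * hL_sq s
  have h_primitive_lim {l : Filter ℝ} (hl : l ≤ cocompact ℝ) {a : ℝ} (hLl : Tendsto L l (𝓝 a)) :
      Tendsto (fun t => L t * (Q t ^ 2 / 3 - Q t / (9 * β) - c / (3 * β))) l
        (𝓝 (-(a * c / (3 * β)))) := by
    have hQl := hQ_lim.mono_left hl
    convert hLl.mul ((((hQl.pow 2).div_const 3).sub (hQl.div_const (9 * β))).sub_const
      (c / (3 * β))) using 2
    ring
  have h_ftc := integral_of_hasDerivAt_of_tendsto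
    (fun s => hasDerivAt_primitive hβ (hQ s) (hL s) (hL_sq s))
    (((h2.const_mul _).add (h3.const_mul _)).add (h4.const_mul _))
    (h_primitive_lim atBot_le_cocompact hL_bot) (h_primitive_lim atTop_le_cocompact hL_top)
  have hc_rpow : c ^ ((3 : ℝ) / 2) = √c * c := by
    rw [show (3 : ℝ) / 2 = 1 / 2 + 1 by norm_num, rpow_add' hc (by norm_num), rpow_one,
      sqrt_eq_rpow]
  rw [integral_const_mul_add_const_mul_add_const_mul h2 h3 h4] at h_ftc
  rw [gardnerEnergy, funext h_deriv_sq, integral_const_mul_add_const_mul_add_const_mul h2 h3 h4,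
    hc_rpow]
  linear_combination h_ftc

end LogDerivative

noncomputable def gardnerLogDeriv (c β : ℝ) (s : ℝ) : ℝ :=
  -(√c * √(1 - 9 * β * c / 2) * sinh (√c * s)) / (1 + √(1 - 9 * β * c / 2) * cosh (√c * s))

section Soliton

variable {c β : ℝ}

lemma gardner_denom_pos (c β s : ℝ) : 0 < 1 + √(1 - 9 * β * c / 2) * cosh (√c * s) := by
  positivity

lemma hasDerivAt_gardner_denom (c β s : ℝ) :
    HasDerivAt (fun t => 1 + √(1 - 9 * β * c / 2) * cosh (√c * t))
      (√c * √(1 - 9 * β * c / 2) * sinh (√c * s)) s := by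
  refine ((((hasDerivAt_id' s).const_mul √c).cosh.const_mul _).const_add 1).congr_deriv ?_
  ring

lemma hasDerivAt_gardnerQ (c β s : ℝ) :
    HasDerivAt (gardnerQ c β) (gardnerQ c β s * gardnerLogDeriv c β s) s := by
  refine ((hasDerivAt_const s (3 * c)).div (hasDerivAt_gardner_denom c β s)
    (gardner_denom_pos c β s).ne').congr_deriv ?_
  simp only [gardnerQ, gardnerLogDeriv]
  field_simp
  ring

lemma hasDerivAt_gardnerLogDeriv (hc : 0 ≤ c) (hρ : 0 ≤ 1 - 9 * β * c / 2) (s : ℝ) :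
    HasDerivAt (gardnerLogDeriv c β)
      (-(gardnerQ c β s) / 3 + β / 2 * gardnerQ c β s ^ 2) s := by
  have hsinh : HasDerivAt (fun t => -(√c * √(1 - 9 * β * c / 2) * sinh (√c * t)))
      (-(√c * √(1 - 9 * β * c / 2) * (cosh (√c * s) * √c))) s :=
    (((hasDerivAt_id' s).const_mul √c).sinh.const_mul _).neg.congr_deriv (by ring)
  refine (hsinh.div (hasDerivAt_gardner_denom c β s)
    (gardner_denom_pos c β s).ne').congr_deriv ?_
  have hk := sq_sqrt hc
  have hρ2 := sq_sqrt hρ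
  have hcs := cosh_sq_sub_sinh_sq (√c * s)
  have hD := (gardner_denom_pos c β s).ne'
  simp only [gardnerQ]
  set k := √c
  set ρ := √(1 - 9 * β * c / 2)
  set x := k * s
  field_simp
  linear_combination (-2 * ρ * cosh x - 2 * ρ ^ 2 * (cosh x ^ 2 - sinh x ^ 2)) * hk
    - 2 * c * ρ ^ 2 * hcs - 2 * c * hρ2

lemma gardnerLogDeriv_sq (hc : 0 ≤ c) (hρ : 0 ≤ 1 - 9 * β * c / 2) (s : ℝ) :
    gardnerLogDeriv c β s ^ 2 = c - 2 / 3 * gardnerQ c β s + β / 2 * gardnerQ c β s ^ 2 := by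
  have hk := sq_sqrt hc
  have hρ2 := sq_sqrt hρ
  have hcs := cosh_sq_sub_sinh_sq (√c * s)
  have hD := (gardner_denom_pos c β s).ne'
  simp only [gardnerQ, gardnerLogDeriv]
  set k := √c
  set ρ := √(1 - 9 * β * c / 2)
  set x := k * s
  field_simp
  linear_combination 2 * ρ ^ 2 * sinh x ^ 2 * hk - 2 * c * ρ ^ 2 * hcs - 2 * c * hρ2

lemma gardnerLogDeriv_nonpos (c β : ℝ) {s : ℝ} (hs : 0 ≤ s) : gardnerLogDeriv c β s ≤ 0 := by
  rw [gardnerLogDeriv, neg_div, neg_nonpos]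
  have := sinh_nonneg_iff.mpr (mul_nonneg (sqrt_nonneg c) hs)
  exact div_nonneg (by positivity) (gardner_denom_pos c β s).le

lemma gardnerLogDeriv_nonneg (c β : ℝ) {s : ℝ} (hs : s ≤ 0) : 0 ≤ gardnerLogDeriv c β s := by
  rw [gardnerLogDeriv, neg_div, neg_nonneg]
  have := sinh_nonpos_iff.mpr (mul_nonpos_of_nonneg_of_nonpos (sqrt_nonneg c) hs)
  exact div_nonpos_of_nonpos_of_nonneg (mul_nonpos_of_nonneg_of_nonpos (by positivity) this)
    (gardner_denom_pos c β s).le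

lemma continuous_gardnerQ (c β : ℝ) : Continuous (gardnerQ c β) :=
  continuous_iff_continuousAt.2 fun s => (hasDerivAt_gardnerQ c β s).continuousAt

lemma gardnerQ_nonneg (hc : 0 ≤ c) (s : ℝ) : 0 ≤ gardnerQ c β s :=
  div_nonneg (by positivity) (gardner_denom_pos c β s).le

lemma gardnerQ_le (hc : 0 ≤ c) (s : ℝ) : gardnerQ c β s ≤ 3 * c :=
  div_le_self (by positivity) (le_add_of_nonneg_right (by positivity))

lemma gardnerQ_sq_le (hρ : 0 < 1 - 9 * β * c / 2) (s : ℝ) :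
    gardnerQ c β s ^ 2 ≤ 9 * c ^ 2 / (1 - 9 * β * c / 2) * (1 + (√c * s) ^ 2)⁻¹ := by
  have hρ2 := sq_sqrt hρ.le
  set ρ := √(1 - 9 * β * c / 2)
  set x := √c * s
  have h_denom : ρ ^ 2 * (1 + x ^ 2) ≤ (1 + ρ * cosh x) ^ 2 :=
    calc ρ ^ 2 * (1 + x ^ 2) ≤ (ρ * cosh x) ^ 2 :=
          (mul_le_mul_of_nonneg_left (one_add_sq_le_cosh_sq x) (sq_nonneg ρ)).trans_eq
            (mul_pow ρ _ 2).symm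
      _ ≤ (1 + ρ * cosh x) ^ 2 := pow_le_pow_left₀ (by positivity) (by linarith) 2
  calc gardnerQ c β s ^ 2 = (3 * c) ^ 2 / (1 + ρ * cosh x) ^ 2 := by rw [gardnerQ, div_pow]
    _ ≤ (3 * c) ^ 2 / (ρ ^ 2 * (1 + x ^ 2)) := by gcongr
    _ = 9 * c ^ 2 / (1 - 9 * β * c / 2) * (1 + x ^ 2)⁻¹ := by
          rw [hρ2, ← div_div, div_eq_mul_inv _ (1 + x ^ 2)]; ring

lemma integrable_gardnerQ_sq (hc : 0 < c) (hρ : 0 < 1 - 9 * β * c / 2) :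
    Integrable fun s => gardnerQ c β s ^ 2 :=
  ((integrable_inv_one_add_sq.comp_mul_left' (sqrt_pos.2 hc).ne').const_mul _).mono'
    ((continuous_gardnerQ c β).pow 2).aestronglyMeasurable <| ae_of_all _ fun s => by
      rw [norm_of_nonneg (sq_nonneg _)]
      exact gardnerQ_sq_le hρ s

lemma integrable_gardnerQ_pow (hc : 0 < c) (hρ : 0 < 1 - 9 * β * c / 2) {n : ℕ} (hn : 2 ≤ n) :
    Integrable fun s => gardnerQ c β s ^ n := by
  obtain ⟨m, rfl⟩ := Nat.exists_eq_add_of_le hn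
  refine ((integrable_gardnerQ_sq hc hρ).bdd_mul (c := (3 * c) ^ m)
    (f := fun s => gardnerQ c β s ^ m)
    ((continuous_gardnerQ c β).pow m).aestronglyMeasurable (ae_of_all _ fun s => ?_)).congr
    (ae_of_all _ fun s => by ring)
  rw [norm_pow, norm_of_nonneg (gardnerQ_nonneg hc.le s)]
  exact pow_le_pow_left₀ (gardnerQ_nonneg hc.le s) (gardnerQ_le hc.le s) m

lemma tendsto_gardnerQ_cocompact (hc : 0 < c) (hρ : 0 < 1 - 9 * β * c / 2) :
    Tendsto (gardnerQ c β) (cocompact ℝ) (𝓝 0) := by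
  have h_sq : Tendsto (fun s => gardnerQ c β s ^ 2) (cocompact ℝ) (𝓝 0) := by
    refine squeeze_zero (fun s => sq_nonneg _) (gardnerQ_sq_le hρ) ?_
    simpa using
      (tendsto_one_add_mul_sq_cocompact (sqrt_pos.2 hc)).inv_tendsto_atTop.const_mul
        (9 * c ^ 2 / (1 - 9 * β * c / 2))
  simpa using tendsto_sqrt_of_tendsto_sq h_sq (.of_forall (gardnerQ_nonneg hc.le))

lemma tendsto_gardnerLogDeriv_sq (hc : 0 < c) (hρ : 0 < 1 - 9 * β * c / 2) :
    Tendsto (fun s => gardnerLogDeriv c β s ^ 2) (cocompact ℝ) (𝓝 c) := by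
  have hQ := tendsto_gardnerQ_cocompact hc hρ
  refine Tendsto.congr (fun s => (gardnerLogDeriv_sq hc.le hρ.le s).symm) ?_
  simpa using ((hQ.const_mul (2 / 3)).const_sub c).add ((hQ.pow 2).const_mul (β / 2))

lemma tendsto_gardnerLogDeriv_atTop (hc : 0 < c) (hρ : 0 < 1 - 9 * β * c / 2) :
    Tendsto (gardnerLogDeriv c β) atTop (𝓝 (-√c)) :=
  tendsto_neg_sqrt_of_tendsto_sq ((tendsto_gardnerLogDeriv_sq hc hρ).mono_left atTop_le_cocompact)
    ((eventually_ge_atTop 0).mono fun _ => gardnerLogDeriv_nonpos c β)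

lemma tendsto_gardnerLogDeriv_atBot (hc : 0 < c) (hρ : 0 < 1 - 9 * β * c / 2) :
    Tendsto (gardnerLogDeriv c β) atBot (𝓝 √c) :=
  tendsto_sqrt_of_tendsto_sq ((tendsto_gardnerLogDeriv_sq hc hρ).mono_left atBot_le_cocompact)
    ((eventually_le_atBot 0).mono fun _ => gardnerLogDeriv_nonneg c β)

end Soliton

end Gardner

open Gardner

theorem stmt5 (β c : ℝ) (hβ : 0 < β) (hc : 0 < c) (hc2 : c < 2 / (9 * β)) :
    gardnerEnergy β (gardnerQ c β)
      = (2 / (3 * β)) * c ^ ((3 : ℝ) / 2)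
        - (1 / (9 * β)) * ∫ s : ℝ, (gardnerQ c β s) ^ 2 := by
  have hρ : 0 < 1 - 9 * β * c / 2 := by
    have := (lt_div_iff₀ (by positivity : (0 : ℝ) < 9 * β)).mp hc2
    linarith
  exact gardnerEnergy_eq_of_hasDerivAt hβ.ne' hc.le (hasDerivAt_gardnerQ c β)
    (hasDerivAt_gardnerLogDeriv hc.le hρ.le) (gardnerLogDeriv_sq hc.le hρ.le)
    (tendsto_gardnerQ_cocompact hc hρ) (tendsto_gardnerLogDeriv_atTop hc hρ)
    (tendsto_gardnerLogDeriv_atBot hc hρ) (integrable_gardnerQ_pow hc hρ le_rfl)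
    (integrable_gardnerQ_pow hc hρ (by norm_num)) (integrable_gardnerQ_pow hc hρ (by norm_num))
end

section
/- Let β > 0. For 0 < c < 2/(9β), the mass of the Gardner soliton, c ↦ (1/2)·∫_ℝ Q_{c,β}(s)² ds, is differentiable in c with derivative ∂_c [(1/2)·∫_ℝ Q_{c,β}²] = 9√c/(2 − 9βc); in particular this derivative is strictly positive for all 0 < c < 2/(9β) (the Weinstein stability condition holds). -/
/-!
With `ρ² + σ² = 1`, `σ = √(9βc/2)`, the substitution `x = √c s` turns the mass into
`9 c^{3/2} ∫₀^∞ (1 + ρ cosh x)⁻² dx`. This integral has an elementary primitive, a combination of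
`log (cosh x + σ sinh x + ρ) - log (1 + ρ cosh x)` and `sinh x / (1 + ρ cosh x)`, whose limit at
infinity is `artanh σ / σ³ - 1 / σ²`. Writing `k = √(9β/2)`, the mass is therefore
`9 artanh (k√c) / k³ - 9√c / k²`, whose derivative in `c` is `9√c / (2 (1 - k²c)) = 9√c / (2 - 9βc)`.
-/

open Real Filter Topology MeasureTheory Set

lemma exp_neg_mul_cosh_sinh (a b c x : ℝ) :
    exp (-x) * (a * cosh x + b * sinh x + c) =
      (a + b) / 2 + (a - b) / 2 * exp (-x) ^ 2 + c * exp (-x) := by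
  rw [cosh_eq, sinh_eq, exp_neg]
  have := exp_ne_zero x
  field_simp
  ring

lemma tendsto_exp_neg_mul_cosh_sinh (a b c : ℝ) :
    Tendsto (fun x => exp (-x) * (a * cosh x + b * sinh x + c)) atTop (𝓝 ((a + b) / 2)) := by
  have hcont : Continuous fun u : ℝ => (a + b) / 2 + (a - b) / 2 * u ^ 2 + c * u := by fun_prop
  have := (hcont.tendsto 0).comp tendsto_exp_neg_atTop_nhds_zero
  simp only [Function.comp_def] at this
  simpa [exp_neg_mul_cosh_sinh] using this

lemma tendsto_cosh_sinh_div_cosh_sinh (a b c a' b' c' : ℝ) (h : a' + b' ≠ 0) :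
    Tendsto (fun x => (a * cosh x + b * sinh x + c) / (a' * cosh x + b' * sinh x + c')) atTop
      (𝓝 ((a + b) / (a' + b'))) := by
  have := (tendsto_exp_neg_mul_cosh_sinh a b c).div (tendsto_exp_neg_mul_cosh_sinh a' b' c')
    (by simpa using h)
  rw [div_div_div_cancel_right₀ two_ne_zero] at this
  exact this.congr fun x => mul_div_mul_left _ _ (exp_ne_zero _)

lemma cosh_add_mul_sinh_add_pos {ρ σ : ℝ} (hρ : 0 ≤ ρ) (hσ : |σ| ≤ 1) (x : ℝ) :
    0 < cosh x + σ * sinh x + ρ := by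
  have h1 : |σ * sinh x| < cosh x := by
    rw [abs_mul]
    calc |σ| * |sinh x| ≤ |sinh x| := mul_le_of_le_one_left (abs_nonneg _) hσ
      _ < cosh x := abs_lt.2 ⟨by linarith [cosh_add_sinh x, exp_pos x], sinh_lt_cosh x⟩
  linarith [neg_abs_le (σ * sinh x)]

lemma artanh_eq_log_one_add_div {ρ σ : ℝ} (hρ : 0 < ρ) (hρσ : ρ ^ 2 + σ ^ 2 = 1) :
    artanh σ = log ((1 + σ) / ρ) := by
  have hσ : σ ^ 2 < 1 := by nlinarith
  have h1 : 0 < 1 + σ := by nlinarith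
  have h2 : 0 < 1 - σ := by nlinarith
  rw [artanh]
  congr 1
  rw [sqrt_eq_iff_mul_self_eq_of_pos (by positivity)]
  field_simp
  linear_combination -hρσ

lemma hasDerivAt_artanh {x : ℝ} (hx : x ∈ Ioo (-1) 1) : HasDerivAt artanh (1 - x ^ 2)⁻¹ x := by
  have h1 : 0 < 1 + x := by linarith [hx.1]
  have h2 : 0 < 1 - x := by linarith [hx.2]
  have hlog : HasDerivAt (fun y => (log (1 + y) - log (1 - y)) / 2) (1 - x ^ 2)⁻¹ x := by
    refine ((((hasDerivAt_id x).const_add 1).log h1.ne').sub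
      (((hasDerivAt_id x).const_sub 1).log h2.ne')).div_const 2 |>.congr_deriv ?_
    have h3 : 1 - x ^ 2 ≠ 0 := (by nlinarith : 0 < 1 - x ^ 2).ne'
    simp only [id]
    field_simp
    ring
  refine hlog.congr_of_eventuallyEq (eventually_of_mem (Ioo_mem_nhds hx.1 hx.2) fun y hy => ?_)
  have hy1 : 0 < 1 + y := by linarith [hy.1]
  have hy2 : 0 < 1 - y := by linarith [hy.2]
  rw [artanh_eq_half_log (Ioo_subset_Icc_self hy), log_div hy1.ne' hy2.ne']
  ring

noncomputable def coshKernelPrimitive (ρ σ x : ℝ) : ℝ :=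
  (log (cosh x + σ * sinh x + ρ) - log (1 + ρ * cosh x)) / σ ^ 3
    - ρ / σ ^ 2 * (sinh x / (1 + ρ * cosh x))

section
variable {ρ σ : ℝ} (hρ : 0 < ρ) (hρσ : ρ ^ 2 + σ ^ 2 = 1)
include hρ hρσ

lemma hasDerivAt_coshKernelPrimitive (hσ : σ ≠ 0) (x : ℝ) :
    HasDerivAt (coshKernelPrimitive ρ σ) ((1 + ρ * cosh x) ^ 2)⁻¹ x := by
  have hσ1 : |σ| ≤ 1 := (sq_le_one_iff_abs_le_one σ).1 (by nlinarith)
  have hN := cosh_add_mul_sinh_add_pos hρ.le hσ1 x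
  have hD : 0 < 1 + ρ * cosh x := by have := cosh_pos x; positivity
  have hch := cosh_sq_sub_sinh_sq x
  have hdN : HasDerivAt (fun x => cosh x + σ * sinh x + ρ) (sinh x + σ * cosh x) x :=
    (((hasDerivAt_cosh x).add ((hasDerivAt_sinh x).const_mul σ))).add_const ρ
  have hdD : HasDerivAt (fun x => 1 + ρ * cosh x) (ρ * sinh x) x :=
    ((hasDerivAt_cosh x).const_mul ρ).const_add 1
  have hdQ : HasDerivAt (fun x => sinh x / (1 + ρ * cosh x))
      ((cosh x + ρ) / (1 + ρ * cosh x) ^ 2) x := by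
    refine ((hasDerivAt_sinh x).div hdD hD.ne').congr_deriv ?_
    congr 1
    linear_combination ρ * hch
  have hlogN : sinh x + σ * cosh x =
      (cosh x + σ * sinh x + ρ) * (ρ * sinh x + σ) / (1 + ρ * cosh x) := by
    field_simp
    linear_combination (-sinh x) * hρσ + ρ * σ * hch
  refine ((((hdN.log hN.ne').sub (hdD.log hD.ne')).div_const (σ ^ 3)).sub
    (hdQ.const_mul (ρ / σ ^ 2))).congr_deriv ?_
  rw [hlogN]
  field_simp
  linear_combination (-σ) * hρσ

lemma tendsto_coshKernelPrimitive_atTop :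
    Tendsto (coshKernelPrimitive ρ σ) atTop (𝓝 (artanh σ / σ ^ 3 - 1 / σ ^ 2)) := by
  have hσ1 : |σ| ≤ 1 := (sq_le_one_iff_abs_le_one σ).1 (by nlinarith)
  have hratio : Tendsto (fun x => (cosh x + σ * sinh x + ρ) / (1 + ρ * cosh x)) atTop
      (𝓝 ((1 + σ) / ρ)) := by
    have := tendsto_cosh_sinh_div_cosh_sinh 1 σ ρ ρ 0 1 (by simpa using hρ.ne')
    simpa [add_comm] using this
  have hlog := (continuousAt_log (div_pos (by nlinarith) hρ).ne').tendsto.comp hratio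
  rw [← artanh_eq_log_one_add_div hρ hρσ] at hlog
  have hsinh : Tendsto (fun x => sinh x / (1 + ρ * cosh x)) atTop (𝓝 (1 / ρ)) := by
    have := tendsto_cosh_sinh_div_cosh_sinh 0 1 0 ρ 0 1 (by simpa using hρ.ne')
    simpa [add_comm] using this
  have := (hlog.div_const (σ ^ 3)).sub (hsinh.const_mul (ρ / σ ^ 2))
  rw [show ρ / σ ^ 2 * (1 / ρ) = 1 / σ ^ 2 by field_simp] at this
  refine this.congr fun x => ?_
  simp only [coshKernelPrimitive, Function.comp_apply]
  rw [log_div (cosh_add_mul_sinh_add_pos hρ.le hσ1 x).ne' (by have := cosh_pos x; positivity)]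

lemma integral_Ioi_inv_one_add_mul_cosh_sq (hσ : σ ≠ 0) :
    ∫ x in Ioi 0, ((1 + ρ * cosh x) ^ 2)⁻¹ = artanh σ / σ ^ 3 - 1 / σ ^ 2 := by
  rw [integral_Ioi_of_hasDerivAt_of_nonneg' (fun x _ => hasDerivAt_coshKernelPrimitive hρ hρσ hσ x)
    (fun x _ => by positivity) (tendsto_coshKernelPrimitive_atTop hρ hρσ)]
  simp [coshKernelPrimitive]

lemma integral_inv_one_add_mul_cosh_sq (hσ : σ ≠ 0) :
    ∫ x, ((1 + ρ * cosh x) ^ 2)⁻¹ = 2 * (artanh σ / σ ^ 3 - 1 / σ ^ 2) := by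
  rw [← integral_Ioi_inv_one_add_mul_cosh_sq hρ hρσ hσ]
  simpa [cosh_abs] using integral_comp_abs (f := fun x => ((1 + ρ * cosh x) ^ 2)⁻¹)

end

noncomputable def gardnerMassFormula (k c : ℝ) : ℝ :=
  9 / k ^ 3 * artanh (k * √c) - 9 / k ^ 2 * √c

lemma half_integral_gardnerQ_sq {β c k : ℝ} (hk : 0 < k) (hkβ : k ^ 2 = 9 * β / 2) (hc : 0 < c)
    (hkc : k ^ 2 * c < 1) :
    1 / 2 * ∫ s, gardnerQ c β s ^ 2 = gardnerMassFormula k c := by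
  have ht : 0 < √c := sqrt_pos.2 hc
  have htc : √c ^ 2 = c := sq_sqrt hc.le
  have hρ : 0 < √(1 - 9 * β * c / 2) := sqrt_pos.2 (by nlinarith)
  have hρσ : √(1 - 9 * β * c / 2) ^ 2 + (k * √c) ^ 2 = 1 := by
    rw [sq_sqrt (by nlinarith), mul_pow, htc]
    linear_combination c * hkβ
  have hQ : ∀ s, gardnerQ c β s ^ 2 =
      9 * c ^ 2 * ((1 + √(1 - 9 * β * c / 2) * cosh (√c * s)) ^ 2)⁻¹ := by
    intro s
    rw [gardnerQ, div_pow]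
    ring
  simp_rw [hQ]
  rw [integral_const_mul,
    Measure.integral_comp_mul_left (fun x => ((1 + √(1 - 9 * β * c / 2) * cosh x) ^ 2)⁻¹),
    integral_inv_one_add_mul_cosh_sq hρ hρσ (by positivity), abs_of_pos (inv_pos.2 ht),
    smul_eq_mul, gardnerMassFormula]
  set t := √c
  rw [← htc]
  field_simp

lemma hasDerivAt_gardnerMassFormula {k c : ℝ} (hk : 0 < k) (hc : 0 < c) (hkc : k ^ 2 * c < 1) :
    HasDerivAt (gardnerMassFormula k) (9 * √c / (2 * (1 - k ^ 2 * c))) c := by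
  have ht : 0 < √c := sqrt_pos.2 hc
  have htc : √c ^ 2 = c := sq_sqrt hc.le
  have hσ : (k * √c) ^ 2 = k ^ 2 * c := by rw [mul_pow, htc]
  have hσ1 : k * √c ∈ Ioo (-1) 1 := ⟨by nlinarith [mul_pos hk ht], by nlinarith [mul_pos hk ht]⟩
  have hsqrt := hasDerivAt_sqrt hc.ne'
  refine (((hasDerivAt_artanh hσ1).comp c (hsqrt.const_mul k)).const_mul (9 / k ^ 3)).sub
    (hsqrt.const_mul (9 / k ^ 2)) |>.congr_deriv ?_
  have hne : 1 - k ^ 2 * c ≠ 0 := by linarith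
  rw [hσ]
  field_simp
  set t := √c
  rw [← htc]
  ring

theorem stmt6 (β : ℝ) (hβ : 0 < β) :
    ∀ c : ℝ, 0 < c → c < 2 / (9 * β) →
      HasDerivAt (fun c' : ℝ => (1 / 2) * ∫ s : ℝ, (gardnerQ c' β s) ^ 2)
        (9 * Real.sqrt c / (2 - 9 * β * c)) c ∧
      0 < 9 * Real.sqrt c / (2 - 9 * β * c) := by
  intro c hc hc2
  set k := √(9 * β / 2)
  have hk : 0 < k := sqrt_pos.2 (by positivity)
  have hkβ : k ^ 2 = 9 * β / 2 := sq_sqrt (by positivity)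
  have hkc : ∀ c' < 2 / (9 * β), k ^ 2 * c' < 1 := fun c' hc' => by
    rw [lt_div_iff₀ (by positivity)] at hc'
    rw [hkβ]
    linarith
  have hmass : (fun c' => 1 / 2 * ∫ s, gardnerQ c' β s ^ 2) =ᶠ[𝓝 c] gardnerMassFormula k :=
    eventually_of_mem (Ioo_mem_nhds hc hc2) fun c' hc' =>
      half_integral_gardnerQ_sq hk hkβ hc'.1 (hkc c' hc'.2)
  have hden : 2 * (1 - k ^ 2 * c) = 2 - 9 * β * c := by rw [hkβ]; ring
  refine ⟨?_, ?_⟩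
  · rw [← hden]
    exact (hasDerivAt_gardnerMassFormula hk hc (hkc c hc2)).congr_of_eventuallyEq hmass
  · have := hkc c hc2
    rw [← hden]
    exact div_pos (by positivity) (by linarith)
end

section
/- Let f : ℝ → ℝ be three times continuously differentiable, let b₀ ∈ ℝ and b₁ ≠ 0, and define f̃(s) := −(1/b₁)·[f(b₀ + b₁s) − f(b₀) − b₁·f'(b₀)·s]. Let ũ : ℝ × ℝ → ℝ be three times continuously differentiable and define u(t,x) := b₀ + b₁·ũ(t, x + f'(b₀)·t). Then u satisfies the defocusing generalized KdV equation u_t + (u_{xx} − f(u))_x = 0 at every point of ℝ × ℝ if and only if ũ = ũ(t,y) satisfies the focusing generalized KdV equation ũ_t + (ũ_{yy} + f̃(ũ))_y = 0 at every point of ℝ × ℝ. -/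
/-!
Write `u t x = b₀ + b₁ ũ t (x + c t)`. In the moving frame `y = x + c t` the flux `u_xx - f u` is
`b₁ ũ_yy - f (b₀ + b₁ ũ) = b₁ (ũ_yy + f̃ ũ) - f b₀ - b₁ c ũ`, so its `y`-derivative is `b₁` times the
flux derivative of `ũ` minus `b₁ c ũ_y`, which cancels the transport term `b₁ c ũ_y` in `u_t`.
Hence the defocusing residual of `u` at `(t, x)` is `b₁` times the focusing residual of `ũ` at
`(t, x + c t)`. This works for every speed `c`; `c = f' b₀` only makes `f̃` vanish to second order.
-/

/-- `u` solves the defocusing generalized KdV equation `u_t + (u_{xx} - f(u))_x = 0`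
pointwise on ℝ × ℝ (first variable is time, second is space). -/
def IsDefocusingGKdVSolution (f : ℝ → ℝ) (u : ℝ → ℝ → ℝ) : Prop :=
  ∀ t x : ℝ,
    deriv (fun τ => u τ x) t
      + deriv (fun ξ => deriv (deriv (u t)) ξ - f (u t ξ)) x = 0

/-- `u` solves the focusing generalized KdV equation `u_t + (u_{yy} + f(u))_y = 0`
pointwise on ℝ × ℝ. -/
def IsFocusingGKdVSolution (f : ℝ → ℝ) (u : ℝ → ℝ → ℝ) : Prop :=
  ∀ t y : ℝ,
    deriv (fun τ => u τ y) t
      + deriv (fun η => deriv (deriv (u t)) η + f (u t η)) y = 0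

open Function

noncomputable def defocusingGKdVResidual (f : ℝ → ℝ) (u : ℝ → ℝ → ℝ) (t x : ℝ) : ℝ :=
  deriv (fun τ => u τ x) t + deriv (fun ξ => deriv (deriv (u t)) ξ - f (u t ξ)) x

noncomputable def focusingGKdVResidual (f : ℝ → ℝ) (u : ℝ → ℝ → ℝ) (t y : ℝ) : ℝ :=
  deriv (fun τ => u τ y) t + deriv (fun η => deriv (deriv (u t)) η + f (u t η)) y

theorem isDefocusingGKdVSolution_iff (f : ℝ → ℝ) (u : ℝ → ℝ → ℝ) :
    IsDefocusingGKdVSolution f u ↔ ∀ t x, defocusingGKdVResidual f u t x = 0 :=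
  Iff.rfl

theorem isFocusingGKdVSolution_iff (f : ℝ → ℝ) (u : ℝ → ℝ → ℝ) :
    IsFocusingGKdVSolution f u ↔ ∀ t y, focusingGKdVResidual f u t y = 0 :=
  Iff.rfl

noncomputable def rescaledNonlinearity (f : ℝ → ℝ) (b₀ b₁ c : ℝ) (s : ℝ) : ℝ :=
  -(1 / b₁) * (f (b₀ + b₁ * s) - f b₀ - b₁ * c * s)

theorem hasDerivAt_comp_moving_frame {v : ℝ → ℝ → ℝ} {t x c : ℝ}
    (hv : DifferentiableAt ℝ (uncurry v) (t, x + c * t)) :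
    HasDerivAt (fun τ => v τ (x + c * τ))
      (deriv (fun τ => v τ (x + c * t)) t + c * deriv (v t) (x + c * t)) t := by
  set y := x + c * t
  set L := fderiv ℝ (uncurry v) (t, y)
  have hL : HasFDerivAt (uncurry v) L (t, y) := hv.hasFDerivAt
  have h_time : deriv (fun τ => v τ y) t = L (1, 0) :=
    (hL.comp_hasDerivAt (f := fun τ => (τ, y)) t
      ((hasDerivAt_id t).prodMk (hasDerivAt_const t y))).deriv
  have h_space : deriv (v t) y = L (0, 1) :=
    (hL.comp_hasDerivAt (f := fun η => (t, η)) y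
      ((hasDerivAt_const y t).prodMk (hasDerivAt_id y))).deriv
  have h_path : HasDerivAt (fun τ => (τ, x + c * τ)) ((1 : ℝ), c) t := by
    simpa using (hasDerivAt_id t).prodMk (((hasDerivAt_id t).const_mul c).const_add x)
  have h_split : ((1 : ℝ), c) = ((1 : ℝ), (0 : ℝ)) + c • ((0 : ℝ), (1 : ℝ)) := by simp
  rw [h_time, h_space, ← smul_eq_mul, ← map_smul, ← map_add, ← h_split]
  exact hL.comp_hasDerivAt t h_path

theorem deriv_deriv_affine_comp_add_const (g : ℝ → ℝ) (b₀ b₁ a : ℝ) :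
    deriv (deriv (fun ξ => b₀ + b₁ * g (ξ + a))) = fun ξ => b₁ * deriv (deriv g) (ξ + a) := by
  have h_shift : ∀ h : ℝ → ℝ, deriv (fun ξ => h (ξ + a)) = fun ξ => deriv h (ξ + a) :=
    fun h => funext (deriv_comp_add_const h a)
  have h_affine : deriv (fun ξ => b₀ + b₁ * g (ξ + a)) = fun ξ => b₁ * deriv g (ξ + a) := by
    funext ξ
    rw [deriv_const_add, deriv_const_mul_field', h_shift]
  rw [h_affine, deriv_const_mul_field', h_shift]

theorem defocusingGKdVResidual_moving_frame {f : ℝ → ℝ} {v : ℝ → ℝ → ℝ} {b₀ b₁ c : ℝ}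
    (hb₁ : b₁ ≠ 0) (hf : Differentiable ℝ f) (hv : Differentiable ℝ (uncurry v))
    (hv₂ : ∀ t, Differentiable ℝ (deriv (deriv (v t)))) (t x : ℝ) :
    defocusingGKdVResidual f (fun t x => b₀ + b₁ * v t (x + c * t)) t x
      = b₁ * focusingGKdVResidual (rescaledNonlinearity f b₀ b₁ c) v t (x + c * t) := by
  simp only [defocusingGKdVResidual, focusingGKdVResidual]
  set y := x + c * t
  set focusingFlux := fun η => deriv (deriv (v t)) η + rescaledNonlinearity f b₀ b₁ c (v t η)
  have hvt : Differentiable ℝ (v t) :=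
    hv.comp (differentiable_const t |>.prodMk differentiable_id)
  have h_flux_diff : Differentiable ℝ focusingFlux := by
    simp only [focusingFlux, rescaledNonlinearity]
    fun_prop
  have h_time : deriv (fun τ => b₀ + b₁ * v τ (x + c * τ)) t
      = b₁ * (deriv (fun τ => v τ y) t + c * deriv (v t) y) :=
    (((hasDerivAt_comp_moving_frame (hv _)).const_mul b₁).const_add b₀).deriv
  set defocusingFlux := fun η => b₁ * focusingFlux η - f b₀ - b₁ * c * v t η
  have h_flux : (fun ξ => deriv (deriv (fun x => b₀ + b₁ * v t (x + c * t))) ξ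
        - f (b₀ + b₁ * v t (ξ + c * t))) = fun ξ => defocusingFlux (ξ + c * t) := by
    funext ξ
    simp only [deriv_deriv_affine_comp_add_const, defocusingFlux, focusingFlux, rescaledNonlinearity]
    field_simp
    ring
  have h_space : deriv defocusingFlux y = b₁ * deriv focusingFlux y - b₁ * c * deriv (v t) y := by
    rw [deriv_fun_sub (by fun_prop) (by fun_prop), deriv_sub_const, deriv_const_mul _ (by fun_prop),
      deriv_const_mul _ (by fun_prop)]
  rw [h_time, h_flux, deriv_comp_add_const defocusingFlux, h_space]
  ring

theorem differentiable_deriv_deriv_of_contDiff_uncurry {v : ℝ → ℝ → ℝ}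
    (hv : ContDiff ℝ 3 (uncurry v)) (t : ℝ) : Differentiable ℝ (deriv (deriv (v t))) :=
  have hvt : ContDiff ℝ (1 + 2 : ℕ) (v t) := hv.comp (contDiff_const.prodMk contDiff_id)
  (hvt.iterate_deriv' 1 2).differentiable one_ne_zero

theorem isDefocusingGKdVSolution_moving_frame_iff {f : ℝ → ℝ} {v : ℝ → ℝ → ℝ} {b₀ b₁ c : ℝ}
    (hb₁ : b₁ ≠ 0) (hf : Differentiable ℝ f) (hv : Differentiable ℝ (uncurry v))
    (hv₂ : ∀ t, Differentiable ℝ (deriv (deriv (v t)))) :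
    IsDefocusingGKdVSolution f (fun t x => b₀ + b₁ * v t (x + c * t))
      ↔ IsFocusingGKdVSolution (rescaledNonlinearity f b₀ b₁ c) v := by
  simp only [isDefocusingGKdVSolution_iff, isFocusingGKdVSolution_iff,
    defocusingGKdVResidual_moving_frame hb₁ hf hv hv₂, mul_eq_zero, hb₁, false_or]
  constructor
  · intro h t y
    simpa using h t (y - c * t)
  · intro h t x
    exact h t _

theorem stmt12 (f : ℝ → ℝ) (hf : ContDiff ℝ 3 f) (b₀ b₁ : ℝ) (hb₁ : b₁ ≠ 0)
    (v : ℝ → ℝ → ℝ) (hv : ContDiff ℝ 3 (Function.uncurry v)) :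
    IsDefocusingGKdVSolution f
        (fun t x => b₀ + b₁ * v t (x + deriv f b₀ * t))
      ↔ IsFocusingGKdVSolution
          (fun s => -(1 / b₁) * (f (b₀ + b₁ * s) - f b₀ - b₁ * deriv f b₀ * s)) v :=
  isDefocusingGKdVSolution_moving_frame_iff hb₁ (hf.differentiable (by norm_num))
    (hv.differentiable (by norm_num)) (differentiable_deriv_deriv_of_contDiff_uncurry hv)
end

section
/- Let u : ℝ → ℝ be twice continuously differentiable, nonnegative, satisfy u(s) → 0 and u'(s) → 0 as s → ±∞, and solve the elliptic Gardner equation u'' − u + u² − (2/9)·u³ = 0 at every point of ℝ. Then u ≡ 0. In other words, the elliptic Gardner equation with parameters c = 1 and β = 2/9 admits no nontrivial nonnegative localized solution. -/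
/-!
Multiplying the equation by `u'` gives the conserved energy `u'²/2 - V(u)` with potential
`V(x) = (x(3 - x))² / 18`, a perfect square because `9βc/2 = 1`. Decay at `+∞` makes the energy
vanish, so `|u'| = u|3 - u|/3`. A positive localized `u` attains a maximum, where `u' = 0` forces
the value `3`, the double zero of `V`. Then `0 ≤ u ≤ 3` gives `|(3 - u)'| ≤ |3 - u|`, and Grönwall's
inequality keeps `u` at the equilibrium `3` forever after, contradicting `u → 0` at `+∞`.
-/

open Filter Topology

theorem sq_div_two_sub_eq_of_hasDerivAt {u u' V V' : ℝ → ℝ}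
    (hu : ∀ s, HasDerivAt u (u' s) s) (hu' : ∀ s, HasDerivAt u' (V' (u s)) s)
    (hV : ∀ x, HasDerivAt V (V' x) x) (s t : ℝ) :
    u' s ^ 2 / 2 - V (u s) = u' t ^ 2 / 2 - V (u t) := by
  have hE : ∀ s, HasDerivAt (fun s => u' s ^ 2 / 2 - V (u s)) 0 s := fun s =>
    ((((hu' s).pow 2).div_const 2).sub ((hV (u s)).comp s (hu s))).congr_deriv (by ring)
  exact is_const_of_deriv_eq_zero (fun s => (hE s).differentiableAt) (fun s => (hE s).deriv) s t

theorem sq_div_two_eq_sub_of_tendsto {u u' V V' : ℝ → ℝ} {a : ℝ}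
    (hu : ∀ s, HasDerivAt u (u' s) s) (hu' : ∀ s, HasDerivAt u' (V' (u s)) s)
    (hV : ∀ x, HasDerivAt V (V' x) x) (hu_top : Tendsto u atTop (𝓝 a))
    (hu'_top : Tendsto u' atTop (𝓝 0)) (s : ℝ) :
    u' s ^ 2 / 2 = V (u s) - V a := by
  have hV_cont : Continuous V := continuous_iff_continuousAt.2 fun x => (hV x).continuousAt
  have hlim : Tendsto (fun t => u' t ^ 2 / 2 - V (u t)) atTop (𝓝 (0 ^ 2 / 2 - V a)) :=
    ((hu'_top.pow 2).div_const 2).sub ((hV_cont.tendsto a).comp hu_top)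
  have hconst : Tendsto (fun t => u' t ^ 2 / 2 - V (u t)) atTop (𝓝 (u' s ^ 2 / 2 - V (u s))) := by
    simp_rw [sq_div_two_sub_eq_of_hasDerivAt hu hu' hV _ s]
    exact tendsto_const_nhds
  have := tendsto_nhds_unique hconst hlim
  linarith

theorem Continuous.exists_forall_ge_of_tendsto_atBot_atTop {f : ℝ → ℝ} (hf : Continuous f)
    {a x₀ : ℝ} (hx₀ : a < f x₀) (hbot : Tendsto f atBot (𝓝 a)) (htop : Tendsto f atTop (𝓝 a)) :
    ∃ t, ∀ s, f s ≤ f t := by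
  refine hf.exists_forall_ge' x₀ ?_
  rw [cocompact_eq_atBot_atTop]
  exact ((hbot.sup htop).eventually (eventually_lt_nhds hx₀)).mono fun _ h => h.le

theorem eq_of_abs_deriv_le_of_eq {u u' : ℝ → ℝ} {c K t : ℝ} (hu : ∀ s, HasDerivAt u (u' s) s)
    (hbound : ∀ s, |u' s| ≤ K * |c - u s|) (ht : u t = c) {s : ℝ} (hs : t ≤ s) : u s = c := by
  have hzero := eq_zero_of_abs_deriv_le_mul_abs_self_of_eq_zero_right (f := fun s => c - u s)
    (f' := fun s => -u' s) (K := K) (a := t) (b := s)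
    (fun x _ => ((hu x).const_sub c).continuousAt.continuousWithinAt)
    (fun x _ => ((hu x).const_sub c).hasDerivWithinAt) (sub_eq_zero.2 ht.symm)
    (fun x _ => by simpa only [Real.norm_eq_abs, abs_neg] using hbound x) s ⟨hs, le_rfl⟩
  exact (sub_eq_zero.1 hzero).symm

theorem abs_deriv_eq_of_gardner {u : ℝ → ℝ} (hu : ContDiff ℝ 2 u)
    (hu_top : Tendsto u atTop (𝓝 0)) (hu'_top : Tendsto (deriv u) atTop (𝓝 0))
    (heq : ∀ s, deriv (deriv u) s - u s + u s ^ 2 - 2 / 9 * u s ^ 3 = 0) (s : ℝ) :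
    |deriv u s| = |u s * (3 - u s)| / 3 := by
  have hd : ∀ s, HasDerivAt u (deriv u s) s := fun s =>
    (hu.differentiable (by norm_num) s).hasDerivAt
  have hdd : ∀ s, HasDerivAt (deriv u) (u s - u s ^ 2 + 2 / 9 * u s ^ 3) s := fun s => by
    have hu' : ContDiff ℝ 1 (deriv u) := hu.iterate_deriv' 1 1
    rw [show u s - u s ^ 2 + 2 / 9 * u s ^ 3 = deriv (deriv u) s by linear_combination -heq s]
    exact (hu'.differentiable one_ne_zero s).hasDerivAt
  have hV : ∀ x : ℝ, HasDerivAt (fun x => (x * (3 - x)) ^ 2 / 18) (x - x ^ 2 + 2 / 9 * x ^ 3) x :=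
    fun x => (((hasDerivAt_id x).mul ((hasDerivAt_const x 3).sub (hasDerivAt_id x))).pow 2
      |>.div_const 18).congr_deriv (by simp; ring)
  have henergy := sq_div_two_eq_sub_of_tendsto hd hdd hV hu_top hu'_top s
  have hsq : deriv u s ^ 2 = (u s * (3 - u s) / 3) ^ 2 := by linear_combination 2 * henergy
  rwa [sq_eq_sq_iff_abs_eq_abs, abs_div, abs_of_pos (three_pos : (0 : ℝ) < 3)] at hsq

theorem stmt19_general (u : ℝ → ℝ) (hu : ContDiff ℝ 2 u)
    (hnonneg : ∀ s : ℝ, 0 ≤ u s)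
    (hu_top : Filter.Tendsto u Filter.atTop (nhds 0))
    (hu_bot : Filter.Tendsto u Filter.atBot (nhds 0))
    (hu'_top : Filter.Tendsto (deriv u) Filter.atTop (nhds 0))
    (heq : ∀ s : ℝ,
      deriv (deriv u) s - u s + (u s) ^ 2 - (2 / 9) * (u s) ^ 3 = 0) :
    ∀ s : ℝ, u s = 0 := by
  have hd : ∀ s, HasDerivAt u (deriv u s) s := fun s =>
    (hu.differentiable (by norm_num) s).hasDerivAt
  have habs := abs_deriv_eq_of_gardner hu hu_top hu'_top heq
  by_contra! ⟨s₀, hs₀⟩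
  obtain ⟨t, ht⟩ := hu.continuous.exists_forall_ge_of_tendsto_atBot_atTop
    ((hnonneg s₀).lt_of_ne' hs₀) hu_bot hu_top
  have ht3 : u t = 3 := by
    have hpos : 0 < u t := ((hnonneg s₀).lt_of_ne' hs₀).trans_le (ht s₀)
    have hcrit := habs t
    rw [IsLocalMax.deriv_eq_zero (Eventually.of_forall ht)] at hcrit
    have : u t * (3 - u t) = 0 := by simpa using hcrit.symm
    rcases mul_eq_zero.1 this with h | h <;> linarith
  have hbound : ∀ s, |deriv u s| ≤ 1 * |3 - u s| := fun s => by
    have hle : u s ≤ 3 := ht3 ▸ ht s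
    rw [habs, abs_mul, abs_of_nonneg (hnonneg s), one_mul, mul_div_right_comm]
    exact mul_le_of_le_one_left (abs_nonneg _) (by linarith)
  have hstay : ∀ᶠ s in atTop, u s = 3 :=
    eventually_atTop.2 ⟨t, fun s hs => eq_of_abs_deriv_le_of_eq hd hbound ht3 hs⟩
  have := tendsto_nhds_unique (tendsto_const_nhds.congr' (hstay.mono fun _ h => h.symm)) hu_top
  norm_num at this

theorem stmt19 (u : ℝ → ℝ) (hu : ContDiff ℝ 2 u)
    (hnonneg : ∀ s : ℝ, 0 ≤ u s)
    (hu_top : Filter.Tendsto u Filter.atTop (nhds 0))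
    (hu_bot : Filter.Tendsto u Filter.atBot (nhds 0))
    (hu'_top : Filter.Tendsto (deriv u) Filter.atTop (nhds 0))
    (hu'_bot : Filter.Tendsto (deriv u) Filter.atBot (nhds 0))
    (heq : ∀ s : ℝ,
      deriv (deriv u) s - u s + (u s) ^ 2 - (2 / 9) * (u s) ^ 3 = 0) :
    ∀ s : ℝ, u s = 0 :=
  stmt19_general u hu hnonneg hu_top hu_bot hu'_top heq
end
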